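/- arXiv:2604.11428 — 4 statements merged into one kernel-verified Lean document; each statement's English description precedes it below -/
import Mathlib

section
/- For all integers n and s with 1 ≤ s ≤ n−3, λ₁(Γ_{s,n}) < λ₁(Γ_{s+1,n}). -/
open Matrix

/-- A signed graph of order `n`: a real symmetric `n × n` matrix with zero diagonal
whose off-diagonal entries lie in `{-1, 0, 1}`. -/
def IsSignedGraph {n : ℕ} (A : Matrix (Fin n) (Fin n) ℝ) : Prop :=
  A.IsSymm ∧ (∀ i, A i i = 0) ∧ ∀ i j, A i j = -1 ∨ A i j = 0 ∨ A i j = 1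

/-- The index (largest eigenvalue) of a signed graph. -/
noncomputable def lambdaMax {n : ℕ} (A : Matrix (Fin n) (Fin n) ℝ) : ℝ :=
  sSup (spectrum ℝ A)

/-- The smallest eigenvalue of a signed graph. -/
noncomputable def lambdaMin {n : ℕ} (A : Matrix (Fin n) (Fin n) ℝ) : ℝ :=
  sInf (spectrum ℝ A)

/-- The spectral radius of a signed graph. -/
noncomputable def rho {n : ℕ} (A : Matrix (Fin n) (Fin n) ℝ) : ℝ :=
  max (lambdaMax A) (-(lambdaMin A))

/-- There is a cycle, all of whose vertices lie in `s`, along whose edges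
the product of the entries of `A` is negative. -/
def HasNegCycleOn {n : ℕ} (A : Matrix (Fin n) (Fin n) ℝ) (s : Set (Fin n)) : Prop :=
  ∃ m : ℕ, 3 ≤ m ∧ ∃ c : ℕ → Fin n,
    (∀ i < m, ∀ j < m, c i = c j → i = j) ∧ (∀ i < m, c i ∈ s) ∧
    (∀ i < m, A (c i) (c ((i + 1) % m)) ≠ 0) ∧
    (∏ i ∈ Finset.range m, A (c i) (c ((i + 1) % m))) < 0

/-- A signed graph is unbalanced if it has a negative cycle. -/
def IsUnbalanced {n : ℕ} (A : Matrix (Fin n) (Fin n) ℝ) : Prop :=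
  HasNegCycleOn A Set.univ

/-- An `m`-element set of pairwise adjacent vertices whose induced signed complete
subgraph is unbalanced. -/
def IsKmMinus {n : ℕ} (A : Matrix (Fin n) (Fin n) ℝ) (m : ℕ) (s : Finset (Fin n)) : Prop :=
  s.card = m ∧ (∀ i ∈ s, ∀ j ∈ s, i ≠ j → A i j ≠ 0) ∧ HasNegCycleOn A ↑s

/-- A `K₄⁻` of a signed graph. -/
def IsK4Minus {n : ℕ} (A : Matrix (Fin n) (Fin n) ℝ) (s : Finset (Fin n)) : Prop :=
  IsKmMinus A 4 s

/-- A signed graph is `t𝒦₄⁻`-free if it contains fewer than `t` distinct `K₄⁻`'s. -/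
def TK4Free {n : ℕ} (t : ℕ) (A : Matrix (Fin n) (Fin n) ℝ) : Prop :=
  {s : Finset (Fin n) | IsK4Minus A s}.ncard < t

/-- Switching isomorphism of signed graphs: `B = (PD) A (PD)ᵀ` for a permutation
matrix `P` and a `±1` diagonal matrix `D`. -/
def SwitchIso {n : ℕ} (A B : Matrix (Fin n) (Fin n) ℝ) : Prop :=
  ∃ (σ : Equiv.Perm (Fin n)) (d : Fin n → ℝ), (∀ i, d i = 1 ∨ d i = -1) ∧
    B = (σ.permMatrix ℝ * Matrix.diagonal d) * A * (σ.permMatrix ℝ * Matrix.diagonal d)ᵀ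

/-- The signed graph `Γ_{s,n}`: the vertices `0, …, n-2` are pairwise adjacent,
the last vertex `n-1` is adjacent exactly to `0, …, s`, and every edge is positive
except the single negative edge joining `n-1` and `0`. -/
noncomputable def GammaSN (s n : ℕ) : Matrix (Fin n) (Fin n) ℝ :=
  fun i j =>
    if i = j then 0
    else if i.val ≠ n - 1 ∧ j.val ≠ n - 1 then 1
    else if min i.val j.val = 0 then -1
    else if min i.val j.val ≤ s then 1
    else 0

/-- The signed graph `Σ_{k,n}` with parameter `r`: vertex `0` is `u₁`, vertex `1` is `u₂`,
vertices `2, …, r+1` are `w₁, …, w_r`, vertices `r+2, …, r+k+1` are `q₁, …, q_k`, and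
vertices `r+k+2, …, n-1` are `v₁, …, v_{n-2-r-k}`.  The only negative edge is `u₁u₂`. -/
noncomputable def SigmaKN (r k n : ℕ) : Matrix (Fin n) (Fin n) ℝ :=
  fun i j =>
    if i = j then 0
    else if min i.val j.val = 0 then (if max i.val j.val = 1 then -1 else 1)
    else if min i.val j.val = 1 then (if max i.val j.val ≤ r + k + 1 then 1 else 0)
    else if max i.val j.val ≤ r + 1 then 1
    else if max i.val j.val ≤ r + k + 1 then 0
    else 1

/-!
Write `b` for the last vertex and `a` for vertex `s + 1` (indices start at `0`), so that
`Γ_{s+1,n}` is `Γ_{s,n}` plus the positive edge `ab`. Adding a positive edge `ab` strictly raises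
the index as soon as some top eigenvector `x` has `x a * x b ≥ 0` and `(x a, x b) ≠ 0`: the
Rayleigh quotient of `x` does not drop, and if the index did not grow, `x` would be a top
eigenvector of the new matrix as well, forcing `x b • e a + x a • e b = 0`.

For `Γ_{s,n}`, with `T = ∑ x j` and `ν = λ² + λ - 2`, the eigen-equations give
`ν * x b = (s - 1) * T` and `(λ + 1) * x a = T - x b`, hence
`(λ + 1) * ν² * (x a * x b) = (s - 1) * (ν - (s - 1)) * T² ≥ 0`, using `λ ≥ n - 2` from the
clique on the first `n - 1` vertices.
-/

section Spectral

variable {n : ℕ} {A B : Matrix (Fin n) (Fin n) ℝ}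

open scoped MatrixOrder in
theorem Matrix.IsHermitian.posSemidef_lambdaMax_smul_one_sub (hA : A.IsHermitian) :
    (lambdaMax A • 1 - A).PosSemidef := by
  have : A ≤ algebraMap ℝ _ (lambdaMax A) :=
    le_algebraMap_of_spectrum_le (fun _ hμ ↦ le_csSup A.finite_spectrum.bddAbove hμ)
      hA.isSelfAdjoint
  rwa [Matrix.le_iff, Algebra.algebraMap_eq_smul_one] at this

theorem Matrix.IsHermitian.dotProduct_mulVec_le_lambdaMax (hA : A.IsHermitian)
    (x : Fin n → ℝ) : x ⬝ᵥ A *ᵥ x ≤ lambdaMax A * (x ⬝ᵥ x) := by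
  have := hA.posSemidef_lambdaMax_smul_one_sub.dotProduct_mulVec_nonneg x
  rw [star_trivial, sub_mulVec, dotProduct_sub, smul_mulVec, one_mulVec, dotProduct_smul,
    smul_eq_mul] at this
  linarith

theorem Matrix.IsHermitian.mulVec_eq_lambdaMax_smul_of_dotProduct_mulVec_eq
    (hA : A.IsHermitian) {x : Fin n → ℝ} (hx : x ⬝ᵥ A *ᵥ x = lambdaMax A * (x ⬝ᵥ x)) :
    A *ᵥ x = lambdaMax A • x := by
  have := (hA.posSemidef_lambdaMax_smul_one_sub.dotProduct_mulVec_zero_iff x).mp (by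
    rw [star_trivial, sub_mulVec, dotProduct_sub, smul_mulVec, one_mulVec, dotProduct_smul,
      smul_eq_mul, hx, sub_self])
  rw [sub_mulVec, smul_mulVec, one_mulVec, sub_eq_zero] at this
  exact this.symm

theorem Matrix.IsHermitian.exists_mulVec_eq_lambdaMax_smul [NeZero n] (hA : A.IsHermitian) :
    ∃ x ≠ 0, A *ᵥ x = lambdaMax A • x := by
  have hmem : lambdaMax A ∈ spectrum ℝ A :=
    Set.Nonempty.csSup_mem ⟨_, hA.eigenvalues_mem_spectrum_real 0⟩ A.finite_spectrum
  rw [← Matrix.spectrum_toLin', ← Module.End.hasEigenvalue_iff_mem_spectrum] at hmem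
  obtain ⟨x, hx⟩ := hmem.exists_hasEigenvector
  exact ⟨x, hx.2, by simpa using hx.apply_eq_smul⟩

theorem lambdaMax_lt_of_mulVec_eq_lambdaMax_smul (hB : B.IsHermitian) {x : Fin n → ℝ}
    (hx : A *ᵥ x = lambdaMax A • x) (hnonneg : 0 ≤ x ⬝ᵥ (B - A) *ᵥ x)
    (hne : (B - A) *ᵥ x ≠ 0) : lambdaMax A < lambdaMax B := by
  have hxB : lambdaMax A * (x ⬝ᵥ x) ≤ x ⬝ᵥ B *ᵥ x := by
    rw [sub_mulVec, dotProduct_sub, hx, dotProduct_smul, smul_eq_mul] at hnonneg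
    linarith
  have hxx : 0 < x ⬝ᵥ x := by
    have hx0 : x ≠ 0 := by rintro rfl; simp at hne
    simpa only [star_trivial] using dotProduct_self_star_pos_iff.mpr hx0
  have hle : lambdaMax A ≤ lambdaMax B :=
    le_of_mul_le_mul_right (hxB.trans (hB.dotProduct_mulVec_le_lambdaMax x)) hxx
  refine hle.lt_of_ne fun heq ↦ hne ?_
  have hBx := hB.mulVec_eq_lambdaMax_smul_of_dotProduct_mulVec_eq
    (le_antisymm (hB.dotProduct_mulVec_le_lambdaMax x) (heq ▸ hxB))
  rw [sub_mulVec, hBx, hx, heq, sub_self]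

end Spectral

section Edge

variable {ι R : Type*} [Fintype ι] [DecidableEq ι] [CommRing R] {a b : ι} {x : ι → R}

theorem dotProduct_single_add_single_mulVec :
    x ⬝ᵥ (single a b 1 + single b a 1) *ᵥ x = 2 * (x a * x b) := by
  simp only [add_mulVec, single_mulVec_eq, dotProduct_add, dotProduct_smul, dotProduct_single,
    smul_eq_mul]
  ring

theorem single_add_single_mulVec_ne_zero (hab : a ≠ b) (hx : x a ≠ 0 ∨ x b ≠ 0) :
    (single a b (1 : R) + single b a 1) *ᵥ x ≠ 0 := by
  intro h
  have hxb : x b = 0 := by simpa [add_mulVec, single_mulVec, hab] using congrFun h a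
  have hxa : x a = 0 := by simpa [add_mulVec, single_mulVec, hab.symm] using congrFun h b
  tauto

end Edge

section GammaSN

variable {s m n : ℕ}

theorem GammaSN_comm (i j : Fin n) : GammaSN s n i j = GammaSN s n j i := by
  simp only [GammaSN, eq_comm (a := i), and_comm, min_comm]

theorem GammaSN_isHermitian (s n : ℕ) : (GammaSN s n).IsHermitian :=
  Matrix.ext fun i j ↦ GammaSN_comm j i

theorem GammaSN_apply_of_ne_last {i j : Fin (m + 1)} (hi : i ≠ Fin.last m)
    (hj : j ≠ Fin.last m) : GammaSN s (m + 1) i j = if i = j then 0 else 1 := by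
  rw [Ne, Fin.ext_iff, Fin.val_last] at hi hj
  simp only [GammaSN, add_tsub_cancel_right]
  split_ifs <;> first | rfl | omega

theorem GammaSN_apply_last (i : Fin (m + 1)) :
    GammaSN s (m + 1) i (Fin.last m) = if i = Fin.last m then 0
      else if (i : ℕ) = 0 then -1 else if (i : ℕ) ≤ s then 1 else 0 := by
  simp only [GammaSN, Fin.ext_iff, Fin.val_last, add_tsub_cancel_right]
  split_ifs <;> first | rfl | omega

theorem GammaSN_mulVec_apply_of_ne_last {i : Fin (m + 1)} (hi : i ≠ Fin.last m)
    (v : Fin (m + 1) → ℝ) :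
    (GammaSN s (m + 1) *ᵥ v) i =
      ∑ j, v j - v i + (GammaSN s (m + 1) i (Fin.last m) - 1) * v (Fin.last m) := by
  have hrow : (fun j ↦ GammaSN s (m + 1) i j) = 1 - Pi.single i 1 +
      (GammaSN s (m + 1) i (Fin.last m) - 1) • Pi.single (Fin.last m) 1 := by
    ext j
    by_cases hj : j = Fin.last m
    · subst hj; simp [hi]
    · rw [GammaSN_apply_of_ne_last hi hj]
      by_cases hij : i = j
      · subst hij; simp [hj]
      · simp [hj, hij, Ne.symm hij]
  rw [mulVec, hrow, add_dotProduct, sub_dotProduct, one_dotProduct, smul_dotProduct,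
    single_dotProduct, single_dotProduct, smul_eq_mul]
  ring

theorem sum_GammaSN_apply_last (hs : s < m) (f : ℝ → ℝ) (hf : f 0 = 0) :
    ∑ j, f (GammaSN s (m + 1) j (Fin.last m)) = f (-1) + s * f 1 := by
  have hterm : ∀ k : Fin m, f (GammaSN s (m + 1) k.castSucc (Fin.last m)) =
      (if (k : ℕ) = 0 then f (-1) else 0) +
        (if (k : ℕ) ∈ Finset.Icc 1 s then f 1 else 0) := by
    intro k
    rw [GammaSN_apply_last, if_neg (Fin.castSucc_ne_last k)]
    simp only [Fin.val_castSucc, Finset.mem_Icc]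
    split_ifs <;> first | omega | simp [hf]
  rw [Fin.sum_univ_castSucc, Finset.sum_congr rfl fun k _ ↦ hterm k, GammaSN_apply_last,
    if_pos rfl, hf, add_zero, Finset.sum_add_distrib,
    Fin.sum_univ_eq_sum_range (fun k ↦ if k = 0 then f (-1) else 0),
    Fin.sum_univ_eq_sum_range (fun k ↦ if k ∈ Finset.Icc 1 s then f 1 else 0),
    Finset.sum_ite_eq', Finset.sum_ite_mem, Finset.inter_eq_right.mpr, Finset.sum_const,
    Nat.card_Icc, if_pos (Finset.mem_range.mpr (by omega))]
  · simp
  · intro k hk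
    simp only [Finset.mem_Icc, Finset.mem_range] at hk ⊢
    omega

theorem GammaSN_succ_sub (hsm : s + 1 < m) :
    GammaSN (s + 1) (m + 1) - GammaSN s (m + 1) = single ⟨s + 1, by omega⟩ (Fin.last m) 1 +
      single (Fin.last m) ⟨s + 1, by omega⟩ 1 := by
  ext i j
  simp only [Matrix.sub_apply, Matrix.add_apply, single_apply, GammaSN, Fin.ext_iff, Fin.val_last,
    add_tsub_cancel_right]
  split_ifs <;> first | omega | norm_num

theorem sub_one_le_lambdaMax_GammaSN (hm : 0 < m) :
    (m : ℝ) - 1 ≤ lambdaMax (GammaSN s (m + 1)) := by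
  set y : Fin (m + 1) → ℝ := Fin.snoc (α := fun _ ↦ ℝ) 1 0
  have hΓy : ∀ i : Fin m, (GammaSN s (m + 1) *ᵥ y) i.castSucc = m - 1 := by
    intro i
    rw [GammaSN_mulVec_apply_of_ne_last (Fin.castSucc_ne_last i), Fin.sum_univ_castSucc]
    simp [y]
  have hyy : y ⬝ᵥ y = m := by simp [dotProduct, Fin.sum_univ_castSucc, y]
  have hyΓy : y ⬝ᵥ GammaSN s (m + 1) *ᵥ y = m * (m - 1) := by
    simp [dotProduct, Fin.sum_univ_castSucc, hΓy, y]
    ring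
  have hray := (GammaSN_isHermitian s (m + 1)).dotProduct_mulVec_le_lambdaMax y
  rw [hyy, hyΓy, mul_comm] at hray
  exact le_of_mul_le_mul_right hray (by exact_mod_cast hm)

end GammaSN

section Eigenvector

variable {s m : ℕ} {μ : ℝ} {x : Fin (m + 1) → ℝ}

theorem GammaSN_eigenvector_apply_of_ne_last (hx : GammaSN s (m + 1) *ᵥ x = μ • x)
    {i : Fin (m + 1)} (hi : i ≠ Fin.last m) :
    (μ + 1) * x i = ∑ j, x j + (GammaSN s (m + 1) i (Fin.last m) - 1) * x (Fin.last m) := by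
  have hrow := GammaSN_mulVec_apply_of_ne_last (s := s) hi x
  rw [hx, Pi.smul_apply, smul_eq_mul] at hrow
  linarith

theorem GammaSN_eigenvector_last (hs : s < m) (hx : GammaSN s (m + 1) *ᵥ x = μ • x) :
    (μ ^ 2 + μ - 2) * x (Fin.last m) = (s - 1) * ∑ j, x j := by
  set T := ∑ j, x j
  set c := x (Fin.last m)
  -- by the eigen-equation of row `j`, `(μ + 1) * Γ_{bj} * x j = f Γ_{jb}`; note `f 0 = 0`
  let f : ℝ → ℝ := fun t ↦ t * T + t * (t - 1) * c
  have hterm : ∀ j, (μ + 1) * (GammaSN s (m + 1) (Fin.last m) j * x j) =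
      f (GammaSN s (m + 1) j (Fin.last m)) := by
    intro j
    rw [GammaSN_comm]
    by_cases hj : j = Fin.last m
    · subst hj; simp [f, GammaSN_apply_last]
    · rw [mul_left_comm, GammaSN_eigenvector_apply_of_ne_last hx hj]; ring
  have hrow : μ * c = ∑ j, GammaSN s (m + 1) (Fin.last m) j * x j := by
    simpa [mulVec, dotProduct] using (congrFun hx (Fin.last m)).symm
  have : (μ + 1) * (μ * c) = f (-1) + s * f 1 := by
    rw [hrow, Finset.mul_sum, Finset.sum_congr rfl fun j _ ↦ hterm j,
      sum_GammaSN_apply_last hs f (by simp [f])]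
  simp only [f] at this
  linear_combination this

theorem GammaSN_eigenvector_apply_ne_zero_or (hμ : μ ≠ -1)
    (hx : GammaSN s (m + 1) *ᵥ x = μ • x) (hx0 : x ≠ 0) {i : Fin (m + 1)}
    (hi : i ≠ Fin.last m) : x i ≠ 0 ∨ x (Fin.last m) ≠ 0 := by
  by_contra! h
  have hT : ∑ j, x j = 0 := by
    simpa [h.1, h.2, eq_comm] using GammaSN_eigenvector_apply_of_ne_last hx hi
  refine hx0 (funext fun j ↦ ?_)
  by_cases hj : j = Fin.last m
  · subst hj; exact h.2
  · have hxj := GammaSN_eigenvector_apply_of_ne_last hx hj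
    rw [hT, h.2, mul_zero, add_zero, mul_eq_zero] at hxj
    exact hxj.resolve_left (by contrapose! hμ; linarith)

theorem GammaSN_eigenvector_mul_nonneg (hs : 1 ≤ s) (hsm : s + 1 < m) (hμ : s + 1 ≤ μ)
    (hx : GammaSN s (m + 1) *ᵥ x = μ • x) :
    0 ≤ x ⟨s + 1, by omega⟩ * x (Fin.last m) := by
  set T := ∑ j, x j
  set c := x (Fin.last m)
  set ν := μ ^ 2 + μ - 2
  have ha : (μ + 1) * x ⟨s + 1, by omega⟩ = T - c := by
    rw [GammaSN_eigenvector_apply_of_ne_last hx (by simp [Fin.ext_iff]; omega),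
      GammaSN_apply_last, if_neg (by simp [Fin.ext_iff]; omega), if_neg (by simp),
      if_neg (by simp)]
    ring
  have hc : ν * c = (s - 1) * T := GammaSN_eigenvector_last (by omega) hx
  have hs' : (1 : ℝ) ≤ s := by exact_mod_cast hs
  have hν : (s : ℝ) - 1 ≤ ν := by nlinarith
  have hν0 : 0 < ν := by nlinarith
  have key : ((μ + 1) * ν ^ 2) * (x ⟨s + 1, by omega⟩ * c) =
      ((s - 1) * (ν - (s - 1))) * T ^ 2 := by
    linear_combination (ν ^ 2 * c) * ha + (ν * T - ν * c - (s - 1) * T) * hc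
  have hμν : 0 < (μ + 1) * ν ^ 2 := mul_pos (by linarith) (by positivity)
  refine nonneg_of_mul_nonneg_right ?_ hμν
  rw [key]
  exact mul_nonneg (mul_nonneg (by linarith) (by linarith)) (sq_nonneg T)

end Eigenvector

theorem lambdaMax_GammaSN_strictMono (n s : ℕ) (hs : 1 ≤ s) (hsn : s + 3 ≤ n) :
    lambdaMax (GammaSN s n) < lambdaMax (GammaSN (s + 1) n) := by
  obtain ⟨m, rfl⟩ : ∃ m, n = m + 1 := ⟨n - 1, by omega⟩
  obtain ⟨x, hx0, hx⟩ := (GammaSN_isHermitian s (m + 1)).exists_mulVec_eq_lambdaMax_smul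
  have hμ : (s : ℝ) + 1 ≤ lambdaMax (GammaSN s (m + 1)) := by
    refine le_trans ?_ (sub_one_le_lambdaMax_GammaSN (by omega))
    have : (s : ℝ) + 3 ≤ m + 1 := by exact_mod_cast hsn
    linarith
  refine lambdaMax_lt_of_mulVec_eq_lambdaMax_smul (GammaSN_isHermitian _ _) hx ?_ ?_ <;>
    rw [GammaSN_succ_sub (by omega)]
  · rw [dotProduct_single_add_single_mulVec]
    exact mul_nonneg zero_le_two (GammaSN_eigenvector_mul_nonneg hs (by omega) hμ hx)
  · refine single_add_single_mulVec_ne_zero (by simp [Fin.ext_iff]; omega) ?_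
    exact GammaSN_eigenvector_apply_ne_zero_or (by linarith) hx hx0 (by simp [Fin.ext_iff]; omega)
end

section
/- Let r ≥ 1 be an integer and let Γ be a signed graph of order n ≥ 1 that is 𝒦_{r+3}⁻-free. Then −λ_n(Γ) ≤ n·(r+1)/(r+2). -/
/-!
Let `v` be a real eigenvector for an eigenvalue `μ` of `A`, and let `H = negProdGraph A v` be the
graph of the pairs `i ≠ j` with `A i j * v i * v j < 0`. As `|A i j| ≤ 1`, we get
`-μ ‖v‖² = -vᵀ A v ≤ |v|ᵀ A_H |v|`. Three pairwise adjacent vertices of `H` carry a negative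
triangle of `A`, so a `K_{r+3}` in `H` would be a `K_{r+3}⁻` of `A`. Hence `H` is `K_{r+3}`-free,
and the Motzkin–Straus inequality bounds `|v|ᵀ A_H |v|` by
`(1 - 1/(r+2)) (∑ |v i|)² ≤ (1 - 1/(r+2)) n ‖v‖²`.
-/

open Matrix

open Finset

section MotzkinStraus

variable {ι : Type*} [Fintype ι]

theorem Matrix.IsSymm.dotProduct_mulVec_le_of_shift [DecidableEq ι] {M : Matrix ι ι ℝ}
    (hM : M.IsSymm) {a b : ι} (haa : M a a = 0) (hbb : M b b = 0) (hab : M a b = 0)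
    (y : ι → ℝ) {c : ℝ} (hc : 0 ≤ c) (hy : (M *ᵥ y) b ≤ (M *ᵥ y) a) :
    y ⬝ᵥ M *ᵥ y ≤ (y + c • (Pi.single a 1 - Pi.single b 1)) ⬝ᵥ
      M *ᵥ (y + c • (Pi.single a 1 - Pi.single b 1)) := by
  set d : ι → ℝ := Pi.single a 1 - Pi.single b 1
  have hdy : d ⬝ᵥ M *ᵥ y = (M *ᵥ y) a - (M *ᵥ y) b := by
    simp [d, sub_dotProduct]
  have hyd : y ⬝ᵥ M *ᵥ d = d ⬝ᵥ M *ᵥ y := by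
    rw [dotProduct_comm, dotProduct_mulVec, ← mulVec_transpose, hM.eq]
  have hdd : d ⬝ᵥ M *ᵥ d = 0 := by
    simp [d, mulVec_sub, sub_dotProduct, dotProduct_sub, haa, hbb, hab, hM.apply a b]
  have hexpand : (y + c • d) ⬝ᵥ M *ᵥ (y + c • d)
      = y ⬝ᵥ M *ᵥ y + 2 * c * (d ⬝ᵥ M *ᵥ y) + c ^ 2 * (d ⬝ᵥ M *ᵥ d) := by
    simp only [mulVec_add, mulVec_smul, add_dotProduct, dotProduct_add, smul_dotProduct,
      dotProduct_smul, hyd, smul_eq_mul]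
    ring
  rw [hexpand, hdd, hdy]
  nlinarith

theorem SimpleGraph.dotProduct_adjMatrix_mulVec_le (G : SimpleGraph ι) [DecidableRel G.Adj]
    {y : ι → ℝ} (hy : 0 ≤ y) :
    y ⬝ᵥ G.adjMatrix ℝ *ᵥ y ≤ (∑ i, y i) ^ 2 - ∑ i, y i ^ 2 := by
  classical
  have hJ : (∑ i, y i) ^ 2 - ∑ i, y i ^ 2 = ∑ i, ∑ j, if i = j then 0 else y i * y j := by
    simp only [sq, Finset.sum_mul_sum, ← Finset.sum_sub_distrib]
    refine sum_congr rfl fun i _ => ?_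
    rw [sum_ite, sum_const_zero, zero_add, filter_ne, sum_erase_eq_sub (mem_univ i)]
  rw [hJ, dotProduct]
  refine sum_le_sum fun i _ => ?_
  rw [mulVec, dotProduct, mul_sum]
  refine sum_le_sum fun j _ => ?_
  by_cases hij : i = j
  · simp [hij]
  · by_cases h : G.Adj i j <;> simp [hij, h, mul_nonneg (hy i) (hy j)]

theorem sq_sum_le_card_support_mul_sum_sq (y : ι → ℝ) :
    (∑ i, y i) ^ 2 ≤ #{i | y i ≠ 0} * ∑ i, y i ^ 2 := by
  rw [← sum_filter_ne_zero, ← sum_filter_of_ne (p := fun i => y i ≠ 0) (f := fun i => y i ^ 2)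
    fun i _ h => by simpa using h]
  exact sq_sum_le_card_mul_sum_sq

theorem SimpleGraph.CliqueFree.dotProduct_adjMatrix_mulVec_le_of_isClique {G : SimpleGraph ι}
    [DecidableRel G.Adj] {t : ℕ} (hG : G.CliqueFree (t + 1)) {y : ι → ℝ} (hy : 0 ≤ y)
    (hs : G.IsClique {i | y i ≠ 0}) :
    y ⬝ᵥ G.adjMatrix ℝ *ᵥ y ≤ (1 - (t : ℝ)⁻¹) * (∑ i, y i) ^ 2 := by
  classical
  have hcard : #{i | y i ≠ 0} ≤ t := by
    by_contra! h
    obtain ⟨u, hus, hu⟩ := exists_subset_card_eq (Nat.succ_le_of_lt h)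
    exact hG u ⟨hs.subset fun i hi => by simpa using hus hi, hu⟩
  have hQ := G.dotProduct_adjMatrix_mulVec_le hy
  have hsq : (∑ i, y i) ^ 2 ≤ t * ∑ i, y i ^ 2 :=
    (sq_sum_le_card_support_mul_sum_sq y).trans
      (mul_le_mul_of_nonneg_right (by exact_mod_cast hcard) (sum_nonneg fun i _ => sq_nonneg _))
  rcases t.eq_zero_or_pos with rfl | ht
  · have := sum_nonneg fun i (_ : i ∈ univ) => sq_nonneg (y i)
    simp only [CharP.cast_eq_zero, _root_.inv_zero, sub_zero, one_mul]
    linarith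
  · have : (t : ℝ)⁻¹ * (∑ i, y i) ^ 2 ≤ ∑ i, y i ^ 2 := by
      rw [inv_mul_le_iff₀ (by exact_mod_cast ht)]
      exact hsq
    linarith

/-- The Motzkin–Straus inequality. Moving the weight of `b` onto a non-neighbour `a` of at least
the same neighbourhood weight does not decrease the form and shrinks the support, so it suffices
to treat weights supported on a clique. -/
theorem SimpleGraph.CliqueFree.dotProduct_adjMatrix_mulVec_le {G : SimpleGraph ι}
    [DecidableRel G.Adj] {t : ℕ} (hG : G.CliqueFree (t + 1)) {y : ι → ℝ} (hy : 0 ≤ y) :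
    y ⬝ᵥ G.adjMatrix ℝ *ᵥ y ≤ (1 - (t : ℝ)⁻¹) * (∑ i, y i) ^ 2 := by
  induction hk : #{i | y i ≠ 0} using Nat.strong_induction_on generalizing y with
  | _ k ih =>
  classical
  set s : Finset ι := {i | y i ≠ 0}
  by_cases hs : G.IsClique (s : Set ι)
  · exact hG.dotProduct_adjMatrix_mulVec_le_of_isClique hy (by simpa [s] using hs)
  obtain ⟨a, ha, b, hb, hab, hnadj⟩ : ∃ a ∈ s, ∃ b ∈ s, a ≠ b ∧ ¬ G.Adj a b := by
    simpa [SimpleGraph.IsClique, Set.Pairwise] using hs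
  wlog hle : (G.adjMatrix ℝ *ᵥ y) b ≤ (G.adjMatrix ℝ *ᵥ y) a generalizing a b
  · exact this b hb a ha hab.symm (fun h => hnadj h.symm) (le_of_not_ge hle)
  set y' := y + y b • (Pi.single a 1 - Pi.single b 1)
  have hy'_apply : ∀ i, y' i = if i = b then 0 else if i = a then y a + y b else y i := by
    intro i
    by_cases hib : i = b
    · subst hib; simp [y', hab.symm]
    · by_cases hia : i = a
      · subst hia; simp [y', hab]
      · simp [y', hia, hib]
  have hy' : 0 ≤ y' := fun i => by
    rw [hy'_apply]
    split_ifs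
    exacts [le_rfl, add_nonneg (hy a) (hy b), hy i]
  have hsum : ∑ i, y' i = ∑ i, y i := by
    simp [y', sum_add_distrib, ← mul_sum, sum_sub_distrib]
  have hsupp : #{i | y' i ≠ 0} < k := by
    rw [← hk]
    refine card_lt_card ((ssubset_iff_of_subset fun i hi => ?_).2 ⟨b, hb, by simp [hy'_apply]⟩)
    simp only [mem_filter, mem_univ, true_and, hy'_apply, s] at hi ⊢
    split_ifs at hi with hib hia
    exacts [absurd rfl hi, hia ▸ (mem_filter.1 ha).2, hi]
  calc y ⬝ᵥ G.adjMatrix ℝ *ᵥ y ≤ y' ⬝ᵥ G.adjMatrix ℝ *ᵥ y' :=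
        G.isSymm_adjMatrix.dotProduct_mulVec_le_of_shift (by simp) (by simp) (by simp [hnadj])
          y (hy b) hle
    _ ≤ (1 - (t : ℝ)⁻¹) * (∑ i, y' i) ^ 2 := ih _ hsupp hy' rfl
    _ = (1 - (t : ℝ)⁻¹) * (∑ i, y i) ^ 2 := by rw [hsum]

end MotzkinStraus

section SignedGraph

variable {ι : Type*} {n : ℕ}

def negProdGraph (A : Matrix ι ι ℝ) (hA : A.IsSymm) (v : ι → ℝ) : SimpleGraph ι where
  Adj i j := i ≠ j ∧ A i j * v i * v j < 0
  symm := ⟨fun i j h =>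
    ⟨h.1.symm, by rw [hA.apply]; linarith [h.2, mul_right_comm (A i j) (v i) (v j)]⟩⟩
  loopless := ⟨fun _ h => h.1 rfl⟩

@[simp]
theorem negProdGraph_adj {A : Matrix ι ι ℝ} {hA : A.IsSymm} {v : ι → ℝ} {i j : ι} :
    (negProdGraph A hA v).Adj i j ↔ i ≠ j ∧ A i j * v i * v j < 0 :=
  Iff.rfl

noncomputable instance (A : Matrix ι ι ℝ) (hA : A.IsSymm) (v : ι → ℝ) :
    DecidableRel (negProdGraph A hA v).Adj :=
  Classical.decRel _

theorem hasNegCycleOn_of_triangle {A : Matrix (Fin n) (Fin n) ℝ} {s : Set (Fin n)}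
    {a b c : Fin n} (ha : a ∈ s) (hb : b ∈ s) (hc : c ∈ s) (hab : a ≠ b) (hac : a ≠ c)
    (hbc : b ≠ c) (h : A a b * A b c * A c a < 0) : HasNegCycleOn A s := by
  have hAab : A a b ≠ 0 := fun h0 => by simp [h0] at h
  have hAbc : A b c ≠ 0 := fun h0 => by simp [h0] at h
  have hAca : A c a ≠ 0 := fun h0 => by simp [h0] at h
  refine ⟨3, le_rfl, fun i => if i = 0 then a else if i = 1 then b else c, ?_, ?_, ?_, ?_⟩
  · intro i hi j hj hij
    interval_cases i <;> interval_cases j <;> simp_all [eq_comm]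
  · intro i hi
    interval_cases i <;> simpa
  · intro i hi
    interval_cases i <;> simpa
  · simpa [prod_range_succ] using h

theorem cliqueFree_negProdGraph {A : Matrix (Fin n) (Fin n) ℝ} (hA : A.IsSymm) (v : Fin n → ℝ)
    {m : ℕ} (hm : 3 ≤ m) (hfree : ∀ s, ¬ IsKmMinus A m s) :
    (negProdGraph A hA v).CliqueFree m := by
  intro s ⟨hclq, hcard⟩
  have hneg : ∀ i ∈ s, ∀ j ∈ s, i ≠ j → A i j * v i * v j < 0 :=
    fun i hi j hj hij => (negProdGraph_adj.1 (hclq hi hj hij)).2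
  obtain ⟨a, ha, b, hb, c, hc, hab, hac, hbc⟩ := two_lt_card.1 (hcard ▸ hm : 2 < #s)
  have htri : (A a b * A b c * A c a) * (v a * v b * v c) ^ 2 < 0 := by
    have h := mul_neg_of_neg_of_pos (hneg a ha b hb hab)
      (mul_pos_of_neg_of_neg (hneg b hb c hc hbc) (hneg c hc a ha hac.symm))
    linarith
  refine hfree s ⟨hcard, fun i hi j hj hij h0 => by simpa [h0] using hneg i hi j hj hij, ?_⟩
  exact hasNegCycleOn_of_triangle (by simpa) (by simpa) (by simpa) hab hac hbc
    (neg_of_mul_neg_left htri (sq_nonneg _))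

theorem IsSignedGraph.neg_dotProduct_mulVec_le {A : Matrix (Fin n) (Fin n) ℝ}
    (hA : IsSignedGraph A) (v : Fin n → ℝ) :
    -(v ⬝ᵥ A *ᵥ v) ≤ |v| ⬝ᵥ (negProdGraph A hA.1 v).adjMatrix ℝ *ᵥ |v| := by
  simp only [dotProduct, mulVec, mul_sum, ← sum_neg_distrib]
  refine sum_le_sum fun i _ => sum_le_sum fun j _ => ?_
  by_cases hadj : (negProdGraph A hA.1 v).Adj i j
  · have hAij : |A i j| ≤ 1 := by rcases hA.2.2 i j with h | h | h <;> simp [h]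
    have : -(A i j * v i * v j) ≤ |v i| * |v j| := by
      rw [← abs_of_neg (negProdGraph_adj.1 hadj).2, abs_mul, abs_mul, mul_assoc]
      exact mul_le_of_le_one_left (by positivity) hAij
    simp only [SimpleGraph.adjMatrix_apply, hadj, if_true, one_mul, Pi.abs_apply]
    linarith
  · have : 0 ≤ A i j * v i * v j := by
      by_cases hij : i = j
      · simp [hij, hA.2.1 j]
      · exact not_lt.1 fun h => hadj (negProdGraph_adj.2 ⟨hij, h⟩)
    simp only [SimpleGraph.adjMatrix_apply, hadj, if_false, zero_mul, mul_zero]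
    linarith

theorem IsSignedGraph.neg_le_of_mem_spectrum {A : Matrix (Fin n) (Fin n) ℝ}
    (hA : IsSignedGraph A) {t : ℕ} (ht : 2 ≤ t) (hfree : ∀ s, ¬ IsKmMinus A (t + 1) s)
    {μ : ℝ} (hμ : μ ∈ spectrum ℝ A) :
    -μ ≤ (1 - (t : ℝ)⁻¹) * n := by
  obtain ⟨v, hv0, hAv⟩ : ∃ v ≠ 0, A *ᵥ v = μ • v := by
    rw [← Matrix.spectrum_toLin', ← Module.End.hasEigenvalue_iff_mem_spectrum] at hμ
    obtain ⟨v, hv⟩ := hμ.exists_hasEigenvector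
    exact ⟨v, hv.2, by simpa [Matrix.toLin'_apply] using hv.apply_eq_smul⟩
  have hG := cliqueFree_negProdGraph hA.1 v (by omega) hfree
  have hW : 0 < v ⬝ᵥ v := (Fintype.sum_nonneg fun i => mul_self_nonneg (v i)).lt_of_ne
    fun h => hv0 (dotProduct_self_eq_zero.1 h.symm)
  have hsum : (∑ i, |v| i) ^ 2 ≤ n * (v ⬝ᵥ v) := by
    simpa [dotProduct, ← sq, sq_abs] using sq_sum_le_card_mul_sum_sq (s := univ) (f := |v|)
  have ht' : (0 : ℝ) ≤ 1 - (t : ℝ)⁻¹ :=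
    sub_nonneg.2 (inv_le_one_of_one_le₀ (by exact_mod_cast (by omega : 1 ≤ t)))
  refine le_of_mul_le_mul_right ?_ hW
  calc -μ * (v ⬝ᵥ v) = -(v ⬝ᵥ A *ᵥ v) := by rw [hAv, dotProduct_smul, smul_eq_mul, neg_mul]
    _ ≤ |v| ⬝ᵥ (negProdGraph A hA.1 v).adjMatrix ℝ *ᵥ |v| := hA.neg_dotProduct_mulVec_le v
    _ ≤ (1 - (t : ℝ)⁻¹) * (∑ i, |v| i) ^ 2 := hG.dotProduct_adjMatrix_mulVec_le (abs_nonneg v)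
    _ ≤ (1 - (t : ℝ)⁻¹) * (n * (v ⬝ᵥ v)) := mul_le_mul_of_nonneg_left hsum ht'
    _ = (1 - (t : ℝ)⁻¹) * n * (v ⬝ᵥ v) := by ring

end SignedGraph

theorem neg_lambdaMin_le_of_Kr3_free_general (r n : ℕ)
    (A : Matrix (Fin n) (Fin n) ℝ) (hA : IsSignedGraph A)
    (hfree : ∀ s : Finset (Fin n), ¬ IsKmMinus A (r + 3) s) :
    -(lambdaMin A) ≤ (n : ℝ) * (r + 1) / (r + 2) := by
  rcases (spectrum ℝ A).eq_empty_or_nonempty with hempty | hne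
  · -- `lambdaMin A = sInf ∅ = 0` here
    rw [lambdaMin, hempty, Real.sInf_empty, neg_zero]
    positivity
  · have hbound : (1 - ((r + 2 : ℕ) : ℝ)⁻¹) * n = n * (r + 1) / (r + 2) := by
      push_cast
      field_simp
      ring
    rw [← hbound]
    exact hA.neg_le_of_mem_spectrum (by omega) hfree (hne.csInf_mem A.finite_spectrum)

theorem neg_lambdaMin_le_of_Kr3_free (r n : ℕ) (hr : 1 ≤ r) (hn : 1 ≤ n)
    (A : Matrix (Fin n) (Fin n) ℝ) (hA : IsSignedGraph A)
    (hfree : ∀ s : Finset (Fin n), ¬ IsKmMinus A (r + 3) s) :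
    -(lambdaMin A) ≤ (n : ℝ) * (r + 1) / (r + 2) :=
  neg_lambdaMin_le_of_Kr3_free_general r n A hA hfree
end

section
/- With the extremal setup below, for all sufficiently large n the underlying graph of Γ′ is connected. -/
open Matrix

/-! If a vertex `j` were not reachable from a vertex `i` with `x i > 0`, adding the positive
edge `ij` would keep the signed graph unbalanced (its negative cycle survives) and
`t𝒦₄⁻`-free (a `K₄⁻` through the new edge would need a common neighbour of `i` and `j`). By
the Rayleigh principle its index is at least `λ₁ + 2 x_i x_j ≥ λ₁`, so maximality forces
`x_j = 0` and makes `x` an eigenvector of the new matrix for its index; but the new row `j`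
of the eigenvalue equation reads `0 = x_i`. -/

lemma Matrix.dotProduct_algebraMap_sub_mulVec {ι : Type*} [Fintype ι] [DecidableEq ι] (c : ℝ)
    (B : Matrix ι ι ℝ) (x : ι → ℝ) :
    x ⬝ᵥ (algebraMap ℝ _ c - B) *ᵥ x = c * (x ⬝ᵥ x) - x ⬝ᵥ B *ᵥ x := by
  rw [Algebra.algebraMap_eq_smul_one, sub_mulVec, smul_mulVec, one_mulVec, dotProduct_sub,
    dotProduct_smul, smul_eq_mul]

namespace Matrix.IsHermitian

variable {n : ℕ} {B : Matrix (Fin n) (Fin n) ℝ}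

lemma posSemidef_lambdaMax_sub (hB : B.IsHermitian) :
    (algebraMap ℝ _ (lambdaMax B) - B).PosSemidef := by
  refine posSemidef_iff_isHermitian_and_spectrum_nonneg.mpr
    ⟨(IsSelfAdjoint.all (lambdaMax B)).algebraMap (A := Matrix (Fin n) (Fin n) ℝ) |>.sub hB, ?_⟩
  rw [← spectrum.singleton_sub_eq]
  rintro _ ⟨c, rfl, μ, hμ, rfl⟩
  exact sub_nonneg.mpr (le_csSup (Matrix.finite_spectrum B).bddAbove hμ)

lemma dotProduct_mulVec_le_lambdaMax_s8 (hB : B.IsHermitian) (x : Fin n → ℝ) :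
    x ⬝ᵥ B *ᵥ x ≤ lambdaMax B * (x ⬝ᵥ x) := by
  have := hB.posSemidef_lambdaMax_sub.dotProduct_mulVec_nonneg x
  rw [star_trivial, dotProduct_algebraMap_sub_mulVec] at this
  linarith

lemma mulVec_eq_lambdaMax_smul (hB : B.IsHermitian) {x : Fin n → ℝ}
    (hx : lambdaMax B * (x ⬝ᵥ x) ≤ x ⬝ᵥ B *ᵥ x) : B *ᵥ x = lambdaMax B • x := by
  have h₀ := (hB.posSemidef_lambdaMax_sub.dotProduct_mulVec_zero_iff x).mp (by
    rw [star_trivial, dotProduct_algebraMap_sub_mulVec]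
    linarith [hB.dotProduct_mulVec_le_lambdaMax_s8 x])
  rw [Algebra.algebraMap_eq_smul_one, sub_mulVec, smul_mulVec, one_mulVec, sub_eq_zero] at h₀
  exact h₀.symm

end Matrix.IsHermitian

section EdgeMatrix

variable {ι : Type*} [DecidableEq ι]

def edgeMatrix (i j : ι) : Matrix ι ι ℝ := single i j 1 + single j i 1

lemma edgeMatrix_apply {i j : ι} (hij : i ≠ j) (a b : ι) :
    edgeMatrix i j a b = if (a = i ∧ b = j) ∨ (a = j ∧ b = i) then 1 else 0 := by
  simp only [edgeMatrix, Matrix.add_apply, single_apply]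
  split_ifs <;> grind

lemma edgeMatrix_apply_of_not_or {i j a b : ι} (h : ¬((a = i ∧ b = j) ∨ (a = j ∧ b = i))) :
    edgeMatrix i j a b = 0 := by
  simp only [edgeMatrix, Matrix.add_apply, single_apply]
  split_ifs <;> grind

lemma isSymm_edgeMatrix (i j : ι) : (edgeMatrix i j).IsSymm := by
  simp [IsSymm, edgeMatrix, add_comm]

variable [Fintype ι]

lemma edgeMatrix_mulVec (i j : ι) (x : ι → ℝ) :
    edgeMatrix i j *ᵥ x = Pi.single i (x j) + Pi.single j (x i) := by
  ext a
  simp [edgeMatrix, add_mulVec, single_mulVec, Pi.single_apply, Function.update_apply]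

lemma dotProduct_edgeMatrix_mulVec (i j : ι) (x : ι → ℝ) :
    x ⬝ᵥ edgeMatrix i j *ᵥ x = 2 * (x i * x j) := by
  rw [edgeMatrix_mulVec, dotProduct_add, dotProduct_single, dotProduct_single]
  ring

end EdgeMatrix

theorem lambdaMax_lt_lambdaMax_add_edgeMatrix {n : ℕ} {A : Matrix (Fin n) (Fin n) ℝ}
    (hA : A.IsHermitian) {x : Fin n → ℝ} (hx : ∀ k, 0 ≤ x k) (hx₁ : x ⬝ᵥ x = 1)
    (hAx : A *ᵥ x = lambdaMax A • x) {i j : Fin n} (hxi : 0 < x i) :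
    lambdaMax A < lambdaMax (A + edgeMatrix i j) := by
  set B := A + edgeMatrix i j
  have hB : B.IsHermitian := hA.add (isHermitian_iff_isSymm.mpr (isSymm_edgeMatrix i j))
  have hBx : B *ᵥ x = lambdaMax A • x + (Pi.single i (x j) + Pi.single j (x i)) := by
    rw [add_mulVec, hAx, edgeMatrix_mulVec]
  have hxBx : x ⬝ᵥ B *ᵥ x = lambdaMax A + 2 * (x i * x j) := by
    rw [add_mulVec, dotProduct_add, hAx, dotProduct_smul, hx₁, dotProduct_edgeMatrix_mulVec,
      smul_eq_mul, mul_one]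
  by_contra! hle
  have hRayleigh := hB.dotProduct_mulVec_le_lambdaMax_s8 x
  rw [hx₁, mul_one, hxBx] at hRayleigh
  have hxj : x j = 0 := by nlinarith [hx j]
  have hBeig := hB.mulVec_eq_lambdaMax_smul (x := x) (by rw [hx₁, hxBx, hxj]; linarith)
  have hxi₀ : x i = 0 := by simpa [hxj] using congrFun (hBx.symm.trans hBeig) j
  exact hxi.ne' hxi₀

section SignedGraph

variable {n : ℕ}

def underlyingGraph (A : Matrix (Fin n) (Fin n) ℝ) : SimpleGraph (Fin n) :=
  SimpleGraph.fromRel fun i j => A i j ≠ 0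

lemma underlyingGraph_adj {A : Matrix (Fin n) (Fin n) ℝ} {i j : Fin n} (hij : i ≠ j)
    (h : A i j ≠ 0) : (underlyingGraph A).Adj i j :=
  (SimpleGraph.fromRel_adj _ i j).mpr ⟨hij, Or.inl h⟩

lemma HasNegCycleOn.of_eq_of_ne_zero {A B : Matrix (Fin n) (Fin n) ℝ} {s : Set (Fin n)}
    (h : HasNegCycleOn A s) (hAB : ∀ a ∈ s, ∀ b ∈ s, A a b ≠ 0 → B a b = A a b) :
    HasNegCycleOn B s := by
  obtain ⟨m, hm, c, hinj, hmem, hne, hprod⟩ := h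
  have hedge : ∀ k < m, B (c k) (c ((k + 1) % m)) = A (c k) (c ((k + 1) % m)) := fun k hk =>
    hAB _ (hmem k hk) _ (hmem _ (Nat.mod_lt _ (by omega))) (hne k hk)
  refine ⟨m, hm, c, hinj, hmem, fun k hk => (hedge k hk).symm ▸ hne k hk, ?_⟩
  rwa [Finset.prod_congr rfl fun k hk => hedge k (Finset.mem_range.mp hk)]

variable {A : Matrix (Fin n) (Fin n) ℝ} {i j : Fin n}

lemma add_edgeMatrix_apply_of_ne_zero (hA : A.IsSymm) (h₀ : A i j = 0) {a b : Fin n}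
    (h : A a b ≠ 0) : (A + edgeMatrix i j) a b = A a b := by
  rw [Matrix.add_apply, edgeMatrix_apply_of_not_or, add_zero]
  rintro (⟨rfl, rfl⟩ | ⟨rfl, rfl⟩)
  exacts [h h₀, h (hA.apply a b ▸ h₀)]

lemma IsSignedGraph.add_edgeMatrix (hA : IsSignedGraph A) (hij : i ≠ j) (h₀ : A i j = 0) :
    IsSignedGraph (A + edgeMatrix i j) := by
  obtain ⟨hsymm, hdiag, hentries⟩ := hA
  refine ⟨hsymm.add (isSymm_edgeMatrix i j), fun a => ?_, fun a b => ?_⟩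
  · simpa [edgeMatrix_apply hij, hdiag] using ⟨fun h => h ▸ hij, fun h => h ▸ hij.symm⟩
  · by_cases h : A a b = 0
    · simp only [Matrix.add_apply, h, zero_add, edgeMatrix_apply hij]
      split_ifs <;> simp
    · rw [add_edgeMatrix_apply_of_ne_zero hsymm h₀ h]
      exact hentries a b

lemma IsUnbalanced.add_edgeMatrix (hA : A.IsSymm) (h₀ : A i j = 0) (hunb : IsUnbalanced A) :
    IsUnbalanced (A + edgeMatrix i j) :=
  hunb.of_eq_of_ne_zero fun _ _ _ _ h => add_edgeMatrix_apply_of_ne_zero hA h₀ h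

lemma IsK4Minus.of_add_edgeMatrix (hij : ¬(underlyingGraph A).Reachable i j)
    {s : Finset (Fin n)} (hs : IsK4Minus (A + edgeMatrix i j) s) : IsK4Minus A s := by
  obtain ⟨hcard, hadj, hcyc⟩ := hs
  have hrow : ∀ a, a ≠ i → a ≠ j → ∀ b, (A + edgeMatrix i j) a b = A a b := by
    intro a hai haj b
    rw [Matrix.add_apply, edgeMatrix_apply_of_not_or (by tauto), add_zero]
  have hsep : ¬(i ∈ s ∧ j ∈ s) := by
    rintro ⟨hi, hj⟩
    have hpos : 0 < (s \ {i, j}).card := by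
      have := Finset.le_card_sdiff {i, j} s
      have := Finset.card_le_two (a := i) (b := j)
      omega
    obtain ⟨k, hk⟩ := Finset.card_pos.mp hpos
    simp only [Finset.mem_sdiff, Finset.mem_insert, Finset.mem_singleton, not_or] at hk
    obtain ⟨hks, hki, hkj⟩ := hk
    have hik : A k i ≠ 0 := hrow k hki hkj i ▸ hadj k hks i hi hki
    have hjk : A k j ≠ 0 := hrow k hki hkj j ▸ hadj k hks j hj hkj
    exact hij ((underlyingGraph_adj hki hik).reachable.symm.trans
      (underlyingGraph_adj hkj hjk).reachable)
  have hagree : ∀ a ∈ s, ∀ b ∈ s, (A + edgeMatrix i j) a b = A a b := by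
    intro a ha b hb
    rw [Matrix.add_apply, edgeMatrix_apply_of_not_or, add_zero]
    rintro (⟨rfl, rfl⟩ | ⟨rfl, rfl⟩)
    exacts [hsep ⟨ha, hb⟩, hsep ⟨hb, ha⟩]
  exact ⟨hcard, fun a ha b hb hab => hagree a ha b hb ▸ hadj a ha b hb hab,
    hcyc.of_eq_of_ne_zero fun a ha b hb _ => (hagree a ha b hb).symm⟩

lemma TK4Free.add_edgeMatrix {t : ℕ} (hij : ¬(underlyingGraph A).Reachable i j)
    (h : TK4Free t A) : TK4Free t (A + edgeMatrix i j) :=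
  (Set.ncard_le_ncard (fun _ hs => IsK4Minus.of_add_edgeMatrix hij hs)
    (Set.toFinite _)).trans_lt h

end SignedGraph

theorem extremal_underlying_connected_general (t : ℕ) :
    ∃ N : ℕ, ∀ n : ℕ, N + 4 ≤ n → t ≤ (n - 2).choose 2 →
      ∀ (A : Matrix (Fin n) (Fin n) ℝ) (x : Fin n → ℝ),
        IsSignedGraph A → IsUnbalanced A → TK4Free t A →
        (∀ B : Matrix (Fin n) (Fin n) ℝ,
          IsSignedGraph B → IsUnbalanced B → TK4Free t B → lambdaMax B ≤ lambdaMax A) →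
        (∀ i, 0 ≤ x i) → (∑ i, x i ^ 2) = 1 → A.mulVec x = lambdaMax A • x →
        (SimpleGraph.fromRel (fun i j => A i j ≠ 0)).Connected := by
  refine ⟨0, fun n _ _ A x hA hunb hfree hmax hx hx₁ hAx => ?_⟩
  have hxx : x ⬝ᵥ x = 1 := by simpa [dotProduct, sq] using hx₁
  obtain ⟨i, hxi⟩ : ∃ i, 0 < x i := by
    by_contra! h
    simp [fun k => le_antisymm (h k) (hx k)] at hx₁
  have hreach : ∀ j, (underlyingGraph A).Reachable i j := by
    intro j
    by_contra hij
    have hne : i ≠ j := by rintro rfl; exact hij .rfl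
    have h₀ : A i j = 0 := by
      by_contra h
      exact hij (underlyingGraph_adj hne h).reachable
    exact (lambdaMax_lt_lambdaMax_add_edgeMatrix (isHermitian_iff_isSymm.mpr hA.1) hx hxx hAx
      hxi).not_ge (hmax _ (hA.add_edgeMatrix hne h₀) (hunb.add_edgeMatrix hA.1 h₀)
        (hfree.add_edgeMatrix hij))
  exact (SimpleGraph.connected_iff_exists_forall_reachable _).mpr ⟨i, hreach⟩

theorem extremal_underlying_connected (t r : ℕ) (ht : 2 ≤ t)
    (hr : (r : ℝ) = (1 + Real.sqrt (8 * (t : ℝ) - 7)) / 2) :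
    ∃ N : ℕ, ∀ n : ℕ, N + 4 ≤ n → t ≤ (n - 2).choose 2 →
      ∀ (A : Matrix (Fin n) (Fin n) ℝ) (x : Fin n → ℝ),
        IsSignedGraph A → IsUnbalanced A → TK4Free t A →
        (∀ B : Matrix (Fin n) (Fin n) ℝ,
          IsSignedGraph B → IsUnbalanced B → TK4Free t B → lambdaMax B ≤ lambdaMax A) →
        (∀ i, 0 ≤ x i) → (∑ i, x i ^ 2) = 1 → A.mulVec x = lambdaMax A • x →
        (SimpleGraph.fromRel (fun i j => A i j ≠ 0)).Connected :=
  extremal_underlying_connected_general t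
end

section
/- With the extremal setup below, assume further that the vertices v₁, v₂, v_n are pairwise adjacent and induce an unbalanced triangle in Γ′. Then, for all sufficiently large n, every negative edge of Γ′ joins two of the vertices v₁, v₂, v_n. -/
open Matrix

/-!
Suppose a negative edge `ij` of `Γ′` is not an edge of the triangle. Deleting it keeps the
triangle, so the result is still unbalanced, and it creates no new `K₄⁻`; by maximality its index
is at most `λ₁(Γ′)`. The Rayleigh quotient of the deleted graph at `x` is `λ₁(Γ′) + 2 xᵢ xⱼ`,
so `xᵢ xⱼ = 0` and `x` has a zero coordinate. Then `λ₁(Γ′) = xᵀ A x ≤ (∑ xₖ)² - 1 ≤ n - 2` by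
Cauchy–Schwarz over the remaining `n - 1` coordinates. This contradicts maximality, because the
all-positive `K_{n-1}` plus a vertex joined negatively to one of its vertices and positively to
two others is unbalanced, has a single `K₄⁻`, and has index greater than `n - 2`.
-/

lemma dotProduct_mulVec_le_lambdaMax_mul {n : ℕ} {A : Matrix (Fin n) (Fin n) ℝ} (hA : A.IsSymm)
    (y : Fin n → ℝ) : y ⬝ᵥ A *ᵥ y ≤ lambdaMax A * (y ⬝ᵥ y) := by
  have hH : A.IsHermitian := by
    rwa [Matrix.IsHermitian, Matrix.conjTranspose_eq_transpose_of_trivial]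
  set U : Matrix (Fin n) (Fin n) ℝ := ↑hH.eigenvectorUnitary
  set z : Fin n → ℝ := star U *ᵥ y
  have hU : U * star U = 1 := Matrix.mem_unitaryGroup_iff.mp hH.eigenvectorUnitary.2
  have hsU : star U = Uᵀ := by
    rw [Matrix.star_eq_conjTranspose, Matrix.conjTranspose_eq_transpose_of_trivial]
  have hquad : y ⬝ᵥ A *ᵥ y = ∑ i, hH.eigenvalues i * z i ^ 2 := by
    conv_lhs => rw [hH.spectral_theorem, Unitary.conjStarAlgAut_apply]
    rw [← Matrix.mulVec_mulVec, ← Matrix.mulVec_mulVec, Matrix.dotProduct_mulVec,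
      ← Matrix.mulVec_transpose, ← hsU]
    simp only [dotProduct, Matrix.mulVec_diagonal, Function.comp_apply,
      RCLike.ofReal_real_eq_id, id_eq]
    exact Finset.sum_congr rfl fun i _ => by ring
  have hnorm : y ⬝ᵥ y = ∑ i, z i ^ 2 := by
    rw [show ∑ i, z i ^ 2 = z ⬝ᵥ z by simp [dotProduct, sq], Matrix.dotProduct_mulVec,
      ← Matrix.mulVec_transpose, hsU, Matrix.transpose_transpose, Matrix.mulVec_mulVec, hU,
      Matrix.one_mulVec]
  rw [hquad, hnorm, Finset.mul_sum]
  exact Finset.sum_le_sum fun i _ => mul_le_mul_of_nonneg_right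
    (le_csSup A.finite_spectrum.bddAbove (hH.eigenvalues_mem_spectrum_real i)) (sq_nonneg _)

section NegCycles

variable {n : ℕ} {A B : Matrix (Fin n) (Fin n) ℝ} {s t : Set (Fin n)}

lemma HasNegCycleOn.mono (h : HasNegCycleOn A s) (hst : s ⊆ t) : HasNegCycleOn A t := by
  obtain ⟨m, hm, c, hinj, hmem, hne, hprod⟩ := h
  exact ⟨m, hm, c, hinj, fun i hi => hst (hmem i hi), hne, hprod⟩

lemma HasNegCycleOn.congr (h : HasNegCycleOn A s) (hAB : ∀ a ∈ s, ∀ b ∈ s, A a b = B a b) :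
    HasNegCycleOn B s := by
  obtain ⟨m, hm, c, hinj, hmem, hne, hprod⟩ := h
  have hedge : ∀ i < m, A (c i) (c ((i + 1) % m)) = B (c i) (c ((i + 1) % m)) := fun i hi =>
    hAB _ (hmem i hi) _ (hmem _ (Nat.mod_lt _ (by omega)))
  refine ⟨m, hm, c, hinj, hmem, fun i hi => hedge i hi ▸ hne i hi, ?_⟩
  rwa [← Finset.prod_congr rfl fun i hi => hedge i (Finset.mem_range.mp hi)]

lemma not_hasNegCycleOn_of_nonneg (h : ∀ a ∈ s, ∀ b ∈ s, 0 ≤ A a b) : ¬HasNegCycleOn A s := by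
  rintro ⟨m, hm, c, -, hmem, -, hprod⟩
  refine hprod.not_ge (Finset.prod_nonneg fun i hi => ?_)
  have hi := Finset.mem_range.mp hi
  exact h _ (hmem i hi) _ (hmem _ (Nat.mod_lt _ (by omega)))

lemma hasNegCycleOn_triangle {a b c : Fin n} (hab : a ≠ b) (hbc : b ≠ c) (hca : c ≠ a)
    (hneg : A a b * A b c * A c a < 0) : HasNegCycleOn A {a, b, c} := by
  have hab0 : A a b ≠ 0 := by intro h; simp [h] at hneg
  have hbc0 : A b c ≠ 0 := by intro h; simp [h] at hneg
  have hca0 : A c a ≠ 0 := by intro h; simp [h] at hneg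
  refine ⟨3, le_rfl, fun i => if i = 0 then a else if i = 1 then b else c, ?_, ?_, ?_, ?_⟩
  · intro i hi j hj hij
    interval_cases i <;> interval_cases j <;> simp_all [eq_comm]
  · intro i hi
    interval_cases i <;> simp
  · intro i hi
    interval_cases i <;> simpa
  · simpa [Finset.prod_range_succ] using hneg

end NegCycles

section DeleteEdge

variable {n : ℕ} {A : Matrix (Fin n) (Fin n) ℝ} {i j : Fin n}

def deleteEdge (A : Matrix (Fin n) (Fin n) ℝ) (i j : Fin n) : Matrix (Fin n) (Fin n) ℝ :=
  Matrix.of fun a b => if s(a, b) = s(i, j) then 0 else A a b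

lemma deleteEdge_apply (a b : Fin n) :
    deleteEdge A i j a b = if s(a, b) = s(i, j) then 0 else A a b := rfl

lemma deleteEdge_apply_of_mem {s : Set (Fin n)} (hij : ¬(i ∈ s ∧ j ∈ s)) {a b : Fin n}
    (ha : a ∈ s) (hb : b ∈ s) : deleteEdge A i j a b = A a b := by
  rw [deleteEdge_apply, if_neg]
  rw [Sym2.eq_iff]
  rintro (⟨rfl, rfl⟩ | ⟨rfl, rfl⟩)
  exacts [hij ⟨ha, hb⟩, hij ⟨hb, ha⟩]

lemma Matrix.IsSymm.deleteEdge (hA : A.IsSymm) (i j : Fin n) : (deleteEdge A i j).IsSymm :=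
  IsSymm.ext fun a b => by simp only [deleteEdge_apply, Sym2.eq_swap, hA.apply]

lemma IsSignedGraph.deleteEdge (hA : IsSignedGraph A) : IsSignedGraph (deleteEdge A i j) := by
  obtain ⟨hsymm, hdiag, hent⟩ := hA
  refine ⟨hsymm.deleteEdge i j, fun a => ?_, fun a b => ?_⟩
  · simp [deleteEdge_apply, hdiag]
  · rw [deleteEdge_apply]
    split_ifs
    exacts [Or.inr (Or.inl rfl), hent a b]

lemma IsKmMinus.of_deleteEdge {m : ℕ} {s : Finset (Fin n)} (h : IsKmMinus (deleteEdge A i j) m s)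
    (hij : i ≠ j) : IsKmMinus A m s := by
  obtain ⟨hcard, hadj, hcyc⟩ := h
  have hout : ¬(i ∈ (s : Set (Fin n)) ∧ j ∈ (s : Set (Fin n))) := fun ⟨hi, hj⟩ =>
    hadj i hi j hj hij (by simp [deleteEdge_apply])
  refine ⟨hcard, fun a ha b hb hab => ?_, hcyc.congr fun a ha b hb => ?_⟩
  · rw [← deleteEdge_apply_of_mem (A := A) hout (Finset.mem_coe.2 ha) (Finset.mem_coe.2 hb)]
    exact hadj a ha b hb hab
  · exact deleteEdge_apply_of_mem hout ha hb

lemma TK4Free.deleteEdge {t : ℕ} (hA : TK4Free t A) (hij : i ≠ j) :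
    TK4Free t (deleteEdge A i j) :=
  (Set.ncard_le_ncard (fun _ hs => IsKmMinus.of_deleteEdge hs hij) (Set.toFinite _)).trans_lt hA

lemma dotProduct_deleteEdge_mulVec (hA : A.IsSymm) (hij : i ≠ j) (x : Fin n → ℝ) :
    x ⬝ᵥ deleteEdge A i j *ᵥ x = x ⬝ᵥ A *ᵥ x - 2 * A i j * x i * x j := by
  have hdiff : deleteEdge A i j = A - single i j (A i j) - single j i (A i j) := by
    ext a b
    simp only [deleteEdge_apply, Sym2.eq_iff, Matrix.sub_apply, single_apply]
    split_ifs <;> grind [hA.apply]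
  simp only [hdiff, sub_mulVec, dotProduct_sub, single_mulVec_eq, dotProduct_smul,
    dotProduct_single_one, smul_eq_mul]
  ring

end DeleteEdge

lemma dotProduct_mulVec_mono {ι : Type*} [Fintype ι] {A B : Matrix ι ι ℝ} {x : ι → ℝ}
    (hAB : ∀ a b, A a b ≤ B a b) (hx : ∀ i, 0 ≤ x i) : x ⬝ᵥ A *ᵥ x ≤ x ⬝ᵥ B *ᵥ x := by
  simp only [dotProduct, mulVec]
  gcongr with a _ b _
  exacts [hx a, hx b, hAB a b]

lemma dotProduct_allOnes_sub_one_mulVec {ι : Type*} [Fintype ι] [DecidableEq ι] (x : ι → ℝ) :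
    x ⬝ᵥ (of (fun _ _ => 1) - 1 : Matrix ι ι ℝ) *ᵥ x = (∑ i, x i) ^ 2 - x ⬝ᵥ x := by
  have hJ : (of (fun _ _ => 1) : Matrix ι ι ℝ) *ᵥ x = fun _ => ∑ i, x i := by
    ext; simp [mulVec, dotProduct]
  rw [sub_mulVec, one_mulVec, hJ, dotProduct_sub, sq]
  simp [dotProduct, Finset.sum_mul]

lemma sq_sum_le_of_eq_zero {n : ℕ} {x : Fin n → ℝ} {k : Fin n} (hk : x k = 0) :
    (∑ i, x i) ^ 2 ≤ (n - 1) * (x ⬝ᵥ x) := by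
  have hsum : ∑ i ∈ Finset.univ.erase k, x i = ∑ i, x i := Finset.sum_erase _ hk
  have hsq : ∑ i ∈ Finset.univ.erase k, x i ^ 2 = x ⬝ᵥ x := by
    rw [Finset.sum_erase _ (by simp [hk])]
    simp [dotProduct, sq]
  have hcs := sq_sum_le_card_mul_sum_sq (s := Finset.univ.erase k) (f := x)
  rw [hsum, hsq, Finset.card_erase_of_mem (Finset.mem_univ k), Finset.card_univ,
    Fintype.card_fin] at hcs
  rwa [Nat.cast_sub k.pos, Nat.cast_one] at hcs

section Extremal

variable {n : ℕ} {A : Matrix (Fin n) (Fin n) ℝ} {x : Fin n → ℝ}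

lemma dotProduct_mulVec_eq_lambdaMax (hxx : x ⬝ᵥ x = 1) (hxeig : A *ᵥ x = lambdaMax A • x) :
    x ⬝ᵥ A *ᵥ x = lambdaMax A := by
  rw [hxeig, dotProduct_smul, hxx, smul_eq_mul, mul_one]

lemma mul_eq_zero_of_lambdaMax_deleteEdge_le (hA : A.IsSymm) {i j : Fin n} (hij : i ≠ j)
    (hneg : A i j < 0) (hx : ∀ i, 0 ≤ x i) (hxx : x ⬝ᵥ x = 1)
    (hxeig : A *ᵥ x = lambdaMax A • x) (hle : lambdaMax (deleteEdge A i j) ≤ lambdaMax A) :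
    x i * x j = 0 := by
  have hray := dotProduct_mulVec_le_lambdaMax_mul (hA.deleteEdge i j) x
  rw [dotProduct_deleteEdge_mulVec hA hij, dotProduct_mulVec_eq_lambdaMax hxx hxeig, hxx,
    mul_one] at hray
  have hxij : 0 ≤ x i * x j := mul_nonneg (hx i) (hx j)
  nlinarith

lemma IsSignedGraph.lambdaMax_le_of_eigenvector_eq_zero (hA : IsSignedGraph A)
    (hx : ∀ i, 0 ≤ x i) (hxx : x ⬝ᵥ x = 1) (hxeig : A *ᵥ x = lambdaMax A • x) {k : Fin n}
    (hk : x k = 0) : lambdaMax A ≤ n - 2 := by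
  have hle : ∀ a b, A a b ≤ (of (fun _ _ => 1) - 1 : Matrix (Fin n) (Fin n) ℝ) a b := by
    intro a b
    rcases eq_or_ne a b with rfl | hab
    · simp [hA.2.1]
    · rcases hA.2.2 a b with h | h | h <;> simp [h, hab]
  have := dotProduct_mulVec_mono hle hx
  rw [dotProduct_allOnes_sub_one_mulVec, dotProduct_mulVec_eq_lambdaMax hxx hxeig, hxx] at this
  have hcs := sq_sum_le_of_eq_zero hk
  rw [hxx] at hcs
  linarith

end Extremal

def extraVertexRow (k : ℕ) : ℝ :=
  if k = 1 then -1 else if k = 2 ∨ k = 3 then 1 else 0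

def cliqueWithExtraVertex (n : ℕ) : Matrix (Fin n) (Fin n) ℝ :=
  of fun a b =>
    if a = b then 0
    else if a.val = 0 then extraVertexRow b
    else if b.val = 0 then extraVertexRow a
    else 1

section CliqueWithExtraVertex

variable {n : ℕ}

lemma sum_extraVertexRow (hn : 4 ≤ n) : ∑ b : Fin n, extraVertexRow b = 1 := by
  obtain ⟨m, rfl⟩ := Nat.exists_eq_add_of_le' hn
  rw [Fin.sum_univ_eq_sum_range (fun k => extraVertexRow k)]
  simp only [Finset.sum_range_succ' _ (_ + 1), Finset.sum_range_succ' _ m]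
  have htail : ∑ k ∈ Finset.range m, extraVertexRow (k + 1 + 1 + 1 + 1) = 0 :=
    Finset.sum_eq_zero fun k _ => by simp [extraVertexRow]
  rw [htail]
  norm_num [extraVertexRow]

lemma cliqueWithExtraVertex_apply_of_val_eq_zero {a : Fin n} (ha : a.val = 0) (b : Fin n) :
    cliqueWithExtraVertex n a b = extraVertexRow b := by
  rcases eq_or_ne a b with rfl | hab
  · simp [cliqueWithExtraVertex, extraVertexRow, ha]
  · simp [cliqueWithExtraVertex, hab, ha]

lemma cliqueWithExtraVertex_apply_of_val_ne_zero {a b : Fin n} (ha : a.val ≠ 0)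
    (hb : b.val ≠ 0) (hab : a ≠ b) : cliqueWithExtraVertex n a b = 1 := by
  simp [cliqueWithExtraVertex, ha, hb, hab]

lemma isSignedGraph_cliqueWithExtraVertex : IsSignedGraph (cliqueWithExtraVertex n) := by
  refine ⟨IsSymm.ext fun a b => ?_, fun a => by simp [cliqueWithExtraVertex], fun a b => ?_⟩
  · simp only [cliqueWithExtraVertex, of_apply]
    split_ifs <;> first | rfl | omega
  · simp only [cliqueWithExtraVertex, extraVertexRow, of_apply]
    split_ifs <;> norm_num

lemma isUnbalanced_cliqueWithExtraVertex (hn : 3 ≤ n) :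
    IsUnbalanced (cliqueWithExtraVertex n) := by
  refine (hasNegCycleOn_triangle (a := ⟨0, by omega⟩) (b := ⟨1, by omega⟩) (c := ⟨2, by omega⟩)
    (by simp) (by simp) (by simp) ?_).mono (Set.subset_univ _)
  simp [cliqueWithExtraVertex, extraVertexRow]

lemma eq_filter_of_isK4Minus_cliqueWithExtraVertex {s : Finset (Fin n)}
    (hs : IsK4Minus (cliqueWithExtraVertex n) s) :
    s = Finset.univ.filter fun b : Fin n => b.val ≤ 3 := by
  obtain ⟨hcard, hadj, hcyc⟩ := hs
  obtain ⟨z, hzs, hz⟩ : ∃ z ∈ s, z.val = 0 := by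
    by_contra! h
    refine not_hasNegCycleOn_of_nonneg (fun a ha b hb => ?_) hcyc
    rcases eq_or_ne a b with rfl | hab
    · simp [cliqueWithExtraVertex]
    · rw [cliqueWithExtraVertex_apply_of_val_ne_zero (h a ha) (h b hb) hab]
      exact zero_le_one
  have hsub : s ⊆ Finset.univ.filter fun b : Fin n => b.val ≤ 3 := by
    intro b hb
    rcases eq_or_ne z b with rfl | hzb
    · simp [hz]
    · have hzb' := hadj z hzs b hb hzb
      rw [cliqueWithExtraVertex_apply_of_val_eq_zero hz, extraVertexRow] at hzb'
      simp only [Finset.mem_filter, Finset.mem_univ, true_and]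
      split_ifs at hzb' <;> first | omega | exact absurd rfl hzb'
  refine Finset.eq_of_subset_of_card_le hsub ?_
  calc (Finset.univ.filter fun b : Fin n => b.val ≤ 3).card
      ≤ (Finset.range 4).card :=
        Finset.card_le_card_of_injOn Fin.val (fun b hb => by simp_all [Nat.lt_succ_iff])
          Fin.val_injective.injOn
    _ = s.card := by rw [Finset.card_range, hcard]

lemma tk4Free_cliqueWithExtraVertex {t : ℕ} (ht : 2 ≤ t) :
    TK4Free t (cliqueWithExtraVertex n) := by
  have hsub : {s | IsK4Minus (cliqueWithExtraVertex n) s} ⊆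
      {Finset.univ.filter fun b : Fin n => b.val ≤ 3} :=
    fun _ hs => eq_filter_of_isK4Minus_cliqueWithExtraVertex hs
  calc {s | IsK4Minus (cliqueWithExtraVertex n) s}.ncard
      ≤ 1 := (Set.ncard_le_ncard hsub (Set.toFinite _)).trans (Set.ncard_singleton _).le
    _ < t := by omega

lemma sum_ite_val_eq_zero (hn : 0 < n) (c : ℝ) :
    ∑ b : Fin n, (if b.val = 0 then c else 0) = c := by
  rw [Fin.sum_univ_eq_sum_range (fun k => if k = 0 then c else 0), Finset.sum_ite_eq']
  simp [hn]

lemma cliqueWithExtraVertex_mulVec_apply (hn : 4 ≤ n) (ε : ℝ) (a : Fin n) :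
    (cliqueWithExtraVertex n *ᵥ fun b => if b.val = 0 then ε else 1) a =
      if a.val = 0 then 1 else n - 2 + extraVertexRow a * ε := by
  simp only [mulVec, dotProduct]
  split_ifs with ha
  · have hterm : ∀ b : Fin n, cliqueWithExtraVertex n a b * (if b.val = 0 then ε else 1) =
        extraVertexRow b := fun b => by
      rw [cliqueWithExtraVertex_apply_of_val_eq_zero ha]
      split_ifs with hb <;> simp [extraVertexRow, hb]
    rw [Finset.sum_congr rfl fun b _ => hterm b, sum_extraVertexRow hn]
  · have hterm : ∀ b : Fin n, cliqueWithExtraVertex n a b * (if b.val = 0 then ε else 1) =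
        1 - (if b = a then 1 else 0) + (if b.val = 0 then extraVertexRow a * ε - 1 else 0) :=
      fun b => by
        rcases eq_or_ne b a with rfl | hba
        · simp [cliqueWithExtraVertex, ha]
        · by_cases hb : b.val = 0
          · simp [cliqueWithExtraVertex, hb, hba, hba.symm, ha]
          · simp [cliqueWithExtraVertex_apply_of_val_ne_zero ha hb hba.symm, hb, hba]
    rw [Finset.sum_congr rfl fun b _ => hterm b, Finset.sum_add_distrib, Finset.sum_sub_distrib,
      sum_ite_val_eq_zero (by omega), Finset.sum_ite_eq']
    simp only [Finset.sum_const, Finset.card_univ, Fintype.card_fin, nsmul_eq_mul, mul_one,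
      Finset.mem_univ, ↓reduceIte]
    ring

lemma dotProduct_cliqueWithExtraVertex_mulVec (hn : 4 ≤ n) (ε : ℝ) :
    let y : Fin n → ℝ := fun b => if b.val = 0 then ε else 1
    y ⬝ᵥ cliqueWithExtraVertex n *ᵥ y = (n - 1) * (n - 2) + 2 * ε := by
  intro y
  have hterm : ∀ a : Fin n, y a * (cliqueWithExtraVertex n *ᵥ y) a =
      n - 2 + extraVertexRow a * ε + (if a.val = 0 then ε - (n - 2) else 0) := fun a => by
    rw [cliqueWithExtraVertex_mulVec_apply hn]
    by_cases ha : a.val = 0 <;> simp [y, ha, extraVertexRow]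
  simp only [dotProduct]
  rw [Finset.sum_congr rfl fun a _ => hterm a, Finset.sum_add_distrib, Finset.sum_add_distrib,
    ← Finset.sum_mul, sum_extraVertexRow hn, sum_ite_val_eq_zero (by omega)]
  simp only [Finset.sum_sub_distrib, Finset.sum_const, Finset.card_univ, Fintype.card_fin,
    nsmul_eq_mul, one_mul]
  ring

lemma dotProduct_self_ite_val_eq_zero (hn : 0 < n) (ε : ℝ) :
    let y : Fin n → ℝ := fun b => if b.val = 0 then ε else 1
    y ⬝ᵥ y = n - 1 + ε ^ 2 := by
  intro y
  have hterm : ∀ a : Fin n, y a * y a = 1 + (if a.val = 0 then ε ^ 2 - 1 else 0) := fun a => by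
    by_cases ha : a.val = 0 <;> simp [y, ha, sq]
  simp only [dotProduct]
  rw [Finset.sum_congr rfl fun a _ => hterm a, Finset.sum_add_distrib, sum_ite_val_eq_zero hn]
  simp only [Finset.sum_const, Finset.card_univ, Fintype.card_fin, nsmul_eq_mul, mul_one]
  ring

lemma lt_lambdaMax_cliqueWithExtraVertex (hn : 4 ≤ n) :
    (n : ℝ) - 2 < lambdaMax (cliqueWithExtraVertex n) := by
  have hn' : (4 : ℝ) ≤ n := by exact_mod_cast hn
  set ε : ℝ := 1 / (n - 2)
  have hε : (n - 2) * ε = 1 := mul_one_div_cancel (by linarith)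
  have hray := dotProduct_mulVec_le_lambdaMax_mul isSignedGraph_cliqueWithExtraVertex.1
    fun b : Fin n => if b.val = 0 then ε else 1
  rw [dotProduct_cliqueWithExtraVertex_mulVec hn, dotProduct_self_ite_val_eq_zero (by omega)] at hray
  by_contra! hle
  nlinarith [mul_le_mul_of_nonneg_right hle (by nlinarith [sq_nonneg ε] : (0 : ℝ) ≤ n - 1 + ε ^ 2)]

end CliqueWithExtraVertex

theorem extremal_negative_edges_in_triangle (t : ℕ) (ht : 2 ≤ t) :
    ∃ N : ℕ, ∀ n : ℕ, ∀ _hn : N + 4 ≤ n, t ≤ (n - 2).choose 2 →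
      ∀ (A : Matrix (Fin n) (Fin n) ℝ) (x : Fin n → ℝ),
        IsSignedGraph A → IsUnbalanced A → TK4Free t A →
        (∀ B : Matrix (Fin n) (Fin n) ℝ,
          IsSignedGraph B → IsUnbalanced B → TK4Free t B → lambdaMax B ≤ lambdaMax A) →
        (∀ i, 0 ≤ x i) → (∑ i, x i ^ 2) = 1 → A.mulVec x = lambdaMax A • x →
        let v1 : Fin n := ⟨0, by omega⟩
        let v2 : Fin n := ⟨1, by omega⟩
        let vn : Fin n := ⟨n - 1, by omega⟩
        A v1 v2 ≠ 0 → A v2 vn ≠ 0 → A vn v1 ≠ 0 →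
        A v1 v2 * A v2 vn * A vn v1 < 0 →
        ∀ i j : Fin n, A i j < 0 →
          i ∈ ({v1, v2, vn} : Set (Fin n)) ∧ j ∈ ({v1, v2, vn} : Set (Fin n)) := by
  refine ⟨0, ?_⟩
  intro n hn _ A x hA _ hfree hmax hx hxx hxeig v1 v2 vn _ _ _ htri i j hij
  by_contra hout
  have hxx : x ⬝ᵥ x = 1 := by simpa [dotProduct, sq] using hxx
  have hij_ne : i ≠ j := by rintro rfl; simp [hA.2.1] at hij
  have htriB : HasNegCycleOn (deleteEdge A i j) {v1, v2, vn} :=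
    (hasNegCycleOn_triangle (by simp [v1, v2]) (by simp [v2, vn, Fin.ext_iff]; omega)
      (by simp [vn, v1, Fin.ext_iff]; omega) htri).congr
      fun a ha b hb => (deleteEdge_apply_of_mem hout ha hb).symm
  have hle := hmax _ hA.deleteEdge (htriB.mono (Set.subset_univ _)) (hfree.deleteEdge hij_ne)
  obtain ⟨k, hk⟩ : ∃ k, x k = 0 := by
    rcases mul_eq_zero.mp
      (mul_eq_zero_of_lambdaMax_deleteEdge_le hA.1 hij_ne hij hx hxx hxeig hle) with h | h
    exacts [⟨i, h⟩, ⟨j, h⟩]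
  have hupper := hA.lambdaMax_le_of_eigenvector_eq_zero hx hxx hxeig hk
  have hlower := hmax _ isSignedGraph_cliqueWithExtraVertex
    (isUnbalanced_cliqueWithExtraVertex (by omega)) (tk4Free_cliqueWithExtraVertex ht)
  linarith [lt_lambdaMax_cliqueWithExtraVertex (by omega : 4 ≤ n)]
end
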